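/- Let A be a real m×n matrix, b ∈ ℝ^m with b not in the column space of A, and let C = (A | b). Suppose v = (v̂ᵀ, γ)ᵀ ∈ ℝ^{n+1} is a unit eigenvector of CᵀC for a positive eigenvalue λ, with γ < 0, and set u = (1/√λ) C v. If x_LS ∈ ℝ^n satisfies the normal equations AᵀA x_LS = Aᵀ b, then uᵀ f(x_LS) > 0, where f(x) = (1 + xᵀx)^{−1/2} (Ax − b). -/

import Mathlib

/-!
Write `w = A xLS - b` for the least-squares residual. The normal equations say `Aᵀ w = 0`, so `w`
is orthogonal to the range of `A`; as `b ∉ range A`, `w ≠ 0`. Since `C v = A v̂ + γ b`, the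
orthogonality kills the `A v̂` part and leaves `(C v) ⬝ w = γ (b ⬝ w) = -γ ‖w‖² > 0`, the middle
step because `b = A xLS - w`. The scalars `1/√λ` and `(1 + xLSᵀ xLS)^(-1/2)` are positive.
-/

open Matrix BigOperators

noncomputable def vnorm {k : ℕ} (v : Fin k → ℝ) : ℝ := Real.sqrt (∑ i, (v i) ^ 2)

noncomputable def fTLS {m n : ℕ} (A : Matrix (Fin m) (Fin n) ℝ) (b : Fin m → ℝ)
    (x : Fin n → ℝ) : Fin m → ℝ :=
  (1 / Real.sqrt (1 + x ⬝ᵥ x)) • (A.mulVec x - b)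

namespace Matrix

theorem dotProduct_self_nonneg {R ι : Type*} [Ring R] [LinearOrder R] [IsStrictOrderedRing R]
    [Fintype ι] (v : ι → R) : 0 ≤ v ⬝ᵥ v :=
  Finset.sum_nonneg fun i _ => mul_self_nonneg (v i)

section CommRing

variable {R ι κ : Type*} [CommRing R] [Fintype ι] [Fintype κ]

theorem mulVec_dotProduct_eq_zero_of_transpose_mulVec_eq_zero {A : Matrix ι κ R} {w : ι → R}
    (hw : Aᵀ *ᵥ w = 0) (y : κ → R) : A *ᵥ y ⬝ᵥ w = 0 := by
  rw [dotProduct_comm, dotProduct_mulVec, ← mulVec_transpose, hw, zero_dotProduct]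

theorem transpose_mulVec_sub_eq_zero_of_normal_eq [DecidableEq κ] {A : Matrix ι κ R}
    {b : ι → R} {x : κ → R} (hx : (Aᵀ * A) *ᵥ x = Aᵀ *ᵥ b) : Aᵀ *ᵥ (A *ᵥ x - b) = 0 := by
  rw [mulVec_sub, mulVec_mulVec, hx, sub_self]

theorem dotProduct_sub_eq_neg_dotProduct_self_of_normal_eq [DecidableEq κ] {A : Matrix ι κ R}
    {b : ι → R} {x : κ → R} (hx : (Aᵀ * A) *ᵥ x = Aᵀ *ᵥ b) :
    b ⬝ᵥ (A *ᵥ x - b) = -((A *ᵥ x - b) ⬝ᵥ (A *ᵥ x - b)) := by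
  have hAx := mulVec_dotProduct_eq_zero_of_transpose_mulVec_eq_zero
    (transpose_mulVec_sub_eq_zero_of_normal_eq hx) x
  have hsplit := sub_dotProduct (A *ᵥ x) b (A *ᵥ x - b)
  rw [hAx] at hsplit
  linear_combination hsplit

end CommRing

theorem of_snoc_mulVec {R ι : Type*} [CommSemiring R] [Fintype ι] {n : ℕ}
    (A : Matrix ι (Fin n) R) (b : ι → R) (v : Fin (n + 1) → R) :
    (of fun i => Fin.snoc (A i) (b i)) *ᵥ v = A *ᵥ Fin.init v + v (Fin.last n) • b := by
  funext i
  simp [mulVec, dotProduct, Fin.sum_univ_castSucc, Fin.init, mul_comm]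

end Matrix

theorem stmt_18_general {m n : ℕ} (A : Matrix (Fin m) (Fin n) ℝ) (b : Fin m → ℝ)
    (hb : ∀ y : Fin n → ℝ, A.mulVec y ≠ b)
    (C : Matrix (Fin m) (Fin (n + 1)) ℝ)
    (hC : C = Matrix.of fun i => Fin.snoc (A i) (b i))
    (lam : ℝ) (hlam : 0 < lam)
    (v : Fin (n + 1) → ℝ)
    (hγ : v (Fin.last n) < 0)
    (u : Fin m → ℝ) (hu : u = (1 / Real.sqrt lam) • C.mulVec v)
    (xLS : Fin n → ℝ) (hxLS : (Aᵀ * A).mulVec xLS = Aᵀ.mulVec b) :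
    u ⬝ᵥ fTLS A b xLS > 0 := by
  set w := A *ᵥ xLS - b with hw
  have hw_pos : 0 < w ⬝ᵥ w := by
    refine (dotProduct_self_nonneg w).lt_of_ne fun h => ?_
    exact hb xLS (sub_eq_zero.mp (dotProduct_self_eq_zero.mp h.symm))
  have hCv : C *ᵥ v ⬝ᵥ w = v (Fin.last n) * -(w ⬝ᵥ w) := by
    rw [hC, of_snoc_mulVec, add_dotProduct, mulVec_dotProduct_eq_zero_of_transpose_mulVec_eq_zero
      (transpose_mulVec_sub_eq_zero_of_normal_eq hxLS), zero_add, smul_dotProduct, smul_eq_mul,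
      dotProduct_sub_eq_neg_dotProduct_self_of_normal_eq hxLS]
  rw [hu, fTLS, smul_dotProduct, dotProduct_smul, ← hw, hCv]
  have hscale : 0 < 1 / √(1 + xLS ⬝ᵥ xLS) := by
    have := dotProduct_self_nonneg xLS
    positivity
  exact mul_pos (by positivity) (mul_pos hscale (mul_pos_of_neg_of_neg hγ (neg_neg_of_pos hw_pos)))

theorem stmt_18 {m n : ℕ} (A : Matrix (Fin m) (Fin n) ℝ) (b : Fin m → ℝ)
    (hb : ∀ y : Fin n → ℝ, A.mulVec y ≠ b)
    (C : Matrix (Fin m) (Fin (n + 1)) ℝ)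
    (hC : C = Matrix.of fun i => Fin.snoc (A i) (b i))
    (lam : ℝ) (hlam : 0 < lam)
    (v : Fin (n + 1) → ℝ) (hv : (Cᵀ * C).mulVec v = lam • v)
    (hvn : vnorm v = 1) (hγ : v (Fin.last n) < 0)
    (u : Fin m → ℝ) (hu : u = (1 / Real.sqrt lam) • C.mulVec v)
    (xLS : Fin n → ℝ) (hxLS : (Aᵀ * A).mulVec xLS = Aᵀ.mulVec b) :
    u ⬝ᵥ fTLS A b xLS > 0 :=
  stmt_18_general A b hb C hC lam hlam v hγ u hu xLS hxLS
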